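/- Let Γ ≤ Aff(n) be a subgroup whose translation lattice Λ_Γ is a full lattice in ℝⁿ and whose holonomy F_Γ is finite. Write N = N_{Aff(n)}(Γ) and C = C_{Aff(n)}(Γ). Then F_Γ is a normal subgroup of τ(N), Γ·C is a normal subgroup of N, and τ induces a surjective group homomorphism N/(Γ·C) → τ(N)/F_Γ whose kernel is finite. -/

import Mathlib

/-!
Elements of the centralizer `C` commute with the translations of `Λ_Γ`, which span `ℝⁿ`, so they
have trivial linear part; hence `τ(Γ·C) ≤ F_Γ` and `τ` descends to the quotients. A class in the
kernel is represented by a translation `t_v ∈ N`. Since `t_v` normalizes `Γ`, `v - A v ∈ Λ_Γ` for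
every `A ∈ F_Γ`, and averaging over the `m = |F_Γ|` holonomy elements gives
`m • v ∈ Λ_Γ + Fix(F_Γ)`. Translations by `Λ_Γ + Fix(F_Γ)` lie in `Γ·C`, so the kernel is covered
by the image of `(1/m)Λ_Γ` in `ℝⁿ/(Λ_Γ + Fix(F_Γ))`, a finitely generated `m`-torsion group and
hence finite.
-/

/-- `Aff n` is the group of invertible affine transformations of `ℝⁿ`. -/
abbrev Aff (n : ℕ) := (Fin n → ℝ) ≃ᵃ[ℝ] (Fin n → ℝ)

/-- `τ : Aff(n) → GL(n,ℝ)`, sending an affine transformation to its linear part. -/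
noncomputable def tau (n : ℕ) : Aff n →* ((Fin n → ℝ) ≃ₗ[ℝ] (Fin n → ℝ)) :=
  AffineEquiv.linearHom

/-- The translation lattice `Λ_Γ` of a subgroup `Γ ≤ Aff(n)`. -/
def transLattice (n : ℕ) (Γ : Subgroup (Aff n)) : Set (Fin n → ℝ) :=
  {v | AffineEquiv.constVAdd ℝ (Fin n → ℝ) v ∈ Γ}

namespace Subgroup

variable {G G' : Type*} [Group G] [Group G']

theorem normal_map_subgroupOf_map_normalizer (f : G →* G') (H : Subgroup G) :
    ((H.map f).subgroupOf ((normalizer (H : Set G)).map f)).Normal :=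
  (normal_subgroupOf_iff_le_normalizer (map_mono le_normalizer)).mpr (le_normalizer_map f)

theorem sup_centralizer_le_normalizer (H : Subgroup G) :
    H ⊔ centralizer (H : Set G) ≤ normalizer (H : Set G) :=
  sup_le le_normalizer (centralizer_le_normalizer _)

theorem normal_sup_centralizer_subgroupOf_normalizer (H : Subgroup G) :
    ((H ⊔ centralizer (H : Set G)).subgroupOf (normalizer (H : Set G))).Normal :=
  (normal_subgroupOf_iff_le_normalizer (sup_centralizer_le_normalizer H)).mpr <|
    normalizer_le_normalizer_sup_of_normalizer_le_left <|
      le_normalizer_of_normal_subgroupOf (centralizer_le_normalizer _)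

end Subgroup

theorem AddMonoidHom.finite_range_of_nsmul_eq_zero {A B : Type*} [AddCommGroup A]
    [AddGroup.FG A] [AddCommGroup B] (f : A →+ B) {m : ℕ} (hm : m ≠ 0)
    (hf : ∀ a, m • f a = 0) : Finite f.range := by
  have : AddGroup.FG f.range := AddGroup.fg_of_surjective f.rangeRestrict_surjective
  refine AddCommGroup.finite_of_fg_isAddTorsion _ fun ⟨_, a, rfl⟩ ↦ ?_
  exact isOfFinAddOrder_iff_nsmul_eq_zero.mpr ⟨m, hm.bot_lt, Subtype.ext (hf a)⟩

namespace AffineEquiv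

variable {k V P : Type*} [Ring k] [AddCommGroup V] [Module k V] [AddTorsor V P]

def translationSubgroup (H : Subgroup (P ≃ᵃ[k] P)) : AddSubgroup V where
  carrier := {v | constVAdd k P v ∈ H}
  zero_mem' := by simp [constVAdd_zero, ← one_def, one_mem]
  add_mem' {v w} hv hw := by simpa [constVAdd_add, ← mul_def] using mul_mem hv hw
  neg_mem' {v} hv := by
    simpa [← constVAdd_symm, ← inv_def] using inv_mem (show constVAdd k P v ∈ H from hv)

def fixedSubspace (H : Subgroup (P ≃ᵃ[k] P)) : Submodule k V where
  carrier := {v | ∀ g ∈ H, g.linear v = v}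
  zero_mem' _ _ := map_zero _
  add_mem' hv hw g hg := by simp only [map_add, hv g hg, hw g hg]
  smul_mem' c v hv g hg := by simp only [map_smul, hv g hg]

variable {H N K : Subgroup (P ≃ᵃ[k] P)}

theorem constVAdd_mul_constVAdd (v w : V) :
    constVAdd k P v * constVAdd k P w = constVAdd k P (v + w) :=
  (constVAdd_add k P v w).symm

theorem constVAdd_inv (v : V) : (constVAdd k P v)⁻¹ = constVAdd k P (-v) :=
  constVAdd_symm k P v

variable (k P) in
theorem constVAdd_injective : Function.Injective (constVAdd k P : V → P ≃ᵃ[k] P) :=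
  fun v w h ↦ by
    obtain ⟨p⟩ := AddTorsor.nonempty (G := V) (P := P)
    exact vadd_right_cancel p (DFunLike.congr_fun h p)

theorem mul_constVAdd_mul_inv (g : P ≃ᵃ[k] P) (v : V) :
    g * constVAdd k P v * g⁻¹ = constVAdd k P (g.linear v) := by
  ext p
  change g (v +ᵥ g.symm p) = g.linear v +ᵥ p
  rw [map_vadd, apply_symm_apply]

theorem eq_constVAdd_of_linear_eq_one {e : P ≃ᵃ[k] P} (he : linearHom e = 1) (p : P) :
    e = constVAdd k P (e p -ᵥ p) := by
  ext q
  change e q = (e p -ᵥ p) +ᵥ q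
  rw [← vsub_vadd q p, map_vadd, show e.linear = LinearEquiv.refl k V from he]
  simp [vsub_vadd_comm]

theorem constVAdd_mem_centralizer {v : V} (hv : v ∈ fixedSubspace H) :
    constVAdd k P v ∈ Subgroup.centralizer (H : Set (P ≃ᵃ[k] P)) := by
  refine Subgroup.mem_centralizer_iff.mpr fun g hg ↦ ?_
  rw [← mul_inv_eq_iff_eq_mul, mul_constVAdd_mul_inv, hv g hg]

theorem centralizer_le_ker_linearHom
    (hspan : Submodule.span k (translationSubgroup H : Set V) = ⊤) :
    Subgroup.centralizer (H : Set (P ≃ᵃ[k] P)) ≤ linearHom.ker := by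
  intro c hc
  refine MonoidHom.mem_ker.mpr (LinearEquiv.toLinearMap_injective ?_)
  refine LinearMap.ext_on hspan fun v hv ↦ constVAdd_injective k P ?_
  change constVAdd k P (c.linear v) = constVAdd k P v
  rw [← mul_constVAdd_mul_inv, mul_inv_eq_iff_eq_mul]
  exact (Subgroup.mem_centralizer_iff.mp hc _ hv).symm

theorem map_sup_centralizer_linearHom_le
    (hspan : Submodule.span k (translationSubgroup H : Set V) = ⊤) :
    (H ⊔ Subgroup.centralizer (H : Set (P ≃ᵃ[k] P))).map linearHom ≤ H.map linearHom := by
  rw [Subgroup.map_sup]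
  exact sup_le le_rfl <| Subgroup.map_le_iff_le_comap.mpr <|
    (centralizer_le_ker_linearHom hspan).trans (MonoidHom.ker_le_comap _ _)

theorem translationSubgroup_sup_fixedSubspace_le :
    translationSubgroup H ⊔ (fixedSubspace H).toAddSubgroup ≤
      translationSubgroup (H ⊔ Subgroup.centralizer (H : Set (P ≃ᵃ[k] P))) :=
  sup_le (fun _ hv ↦ Subgroup.mem_sup_left hv)
    fun _ hv ↦ Subgroup.mem_sup_right (constVAdd_mem_centralizer hv)

theorem sub_linear_mem_translationSubgroup {v : V}
    (hv : constVAdd k P v ∈ Subgroup.normalizer (H : Set (P ≃ᵃ[k] P))) {g : P ≃ᵃ[k] P}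
    (hg : g ∈ H) : v - g.linear v ∈ translationSubgroup H := by
  have hconj : constVAdd k P v * g * (constVAdd k P v)⁻¹ * g⁻¹ ∈ H :=
    mul_mem ((Subgroup.mem_normalizer_iff.mp hv g).mp hg) (inv_mem hg)
  rwa [mul_assoc, mul_assoc, ← mul_assoc g, constVAdd_inv, mul_constVAdd_mul_inv,
    constVAdd_mul_constVAdd, map_neg, ← sub_eq_add_neg] at hconj

theorem card_smul_mem_translationSubgroup_sup_fixedSubspace [Finite (H.map linearHom)] {v : V}
    (hv : constVAdd k P v ∈ Subgroup.normalizer (H : Set (P ≃ᵃ[k] P))) :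
    Nat.card (H.map linearHom) • v ∈ translationSubgroup H ⊔ (fixedSubspace H).toAddSubgroup := by
  have := Fintype.ofFinite (H.map linearHom)
  have hsplit : Nat.card (H.map linearHom) • v =
      ∑ A : H.map linearHom, (v - (A : V ≃ₗ[k] V) v) +
        ∑ A : H.map linearHom, (A : V ≃ₗ[k] V) v := by
    rw [← Finset.sum_add_distrib, Nat.card_eq_fintype_card]
    simp
  rw [hsplit]
  refine AddSubgroup.add_mem_sup (AddSubgroup.sum_mem _ fun ⟨_, g, hg, rfl⟩ _ ↦
    sub_linear_mem_translationSubgroup hv hg) fun g hg ↦ ?_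
  rw [map_sum]
  exact Fintype.sum_equiv (Equiv.mulLeft ⟨linearHom g, Subgroup.mem_map_of_mem _ hg⟩) _ _
    fun _ ↦ rfl

theorem exists_eq_constVAdd_mul {g : P ≃ᵃ[k] P} (hg : linearHom g ∈ H.map linearHom) :
    ∃ v : V, ∃ γ ∈ H, g = constVAdd k P v * γ := by
  obtain ⟨γ, hγ, hγg⟩ := hg
  obtain ⟨p⟩ := AddTorsor.nonempty (G := V) (P := P)
  refine ⟨(g * γ⁻¹) p -ᵥ p, γ, hγ, ?_⟩
  rw [← eq_constVAdd_of_linear_eq_one (by rw [map_mul, map_inv, hγg, mul_inv_cancel]),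
    inv_mul_cancel_right]

variable (N K) in
def translationClass (v : translationSubgroup N) : N ⧸ K.subgroupOf N :=
  QuotientGroup.mk ⟨constVAdd k P v, v.2⟩

theorem mk_mem_range_translationClass (hHN : H ≤ N) (hHK : H ≤ K) {g : P ≃ᵃ[k] P} (hgN : g ∈ N)
    (hg : linearHom g ∈ H.map linearHom) :
    (QuotientGroup.mk ⟨g, hgN⟩ : N ⧸ K.subgroupOf N) ∈ Set.range (translationClass N K) := by
  obtain ⟨v, γ, hγ, rfl⟩ := exists_eq_constVAdd_mul hg
  have hv : constVAdd k P v ∈ N := by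
    simpa using mul_mem hgN (inv_mem (hHN hγ))
  refine ⟨⟨v, hv⟩, QuotientGroup.eq.mpr ?_⟩
  simpa [Subgroup.mem_subgroupOf] using hHK hγ

theorem finite_range_translationClass
    [(translationSubgroup K).IsFiniteRelIndex (translationSubgroup N)] :
    (Set.range (translationClass N K)).Finite := by
  let lift :
      translationSubgroup N ⧸ (translationSubgroup K).addSubgroupOf (translationSubgroup N) →
        N ⧸ K.subgroupOf N :=
    Quotient.lift (translationClass N K) fun v w hvw ↦ QuotientGroup.eq.mpr <| by
      have := AddSubgroup.mem_addSubgroupOf.mp (QuotientAddGroup.leftRel_apply.mp hvw)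
      rwa [Subgroup.mem_subgroupOf, Subgroup.coe_mul, Subgroup.coe_inv, constVAdd_inv,
        constVAdd_mul_constVAdd]
  refine (Set.finite_range lift).subset ?_
  rintro _ ⟨v, rfl⟩
  exact ⟨QuotientAddGroup.mk v, rfl⟩

end AffineEquiv

section Lattice

variable {E : Type*} [NormedAddCommGroup E] [NormedSpace ℝ E] [FiniteDimensional ℝ E]

theorem AddSubgroup.fg_of_discreteTopology (L : AddSubgroup E) [hL : DiscreteTopology L] :
    AddGroup.FG L :=
  have : DiscreteTopology L.toIntSubmodule := hL
  Module.Finite.iff_addGroup_fg.mp (instModuleFinite_of_discrete_submodule L.toIntSubmodule)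

theorem AddSubgroup.isFiniteRelIndex_sup_of_nsmul_mem (L : AddSubgroup E) [DiscreteTopology L]
    (W : Submodule ℝ E) {D : AddSubgroup E} {m : ℕ} (hm : m ≠ 0)
    (hD : ∀ v ∈ D, m • v ∈ L ⊔ W.toAddSubgroup) :
    (L ⊔ W.toAddSubgroup).IsFiniteRelIndex D := by
  set S := L ⊔ W.toAddSubgroup
  have := L.fg_of_discreteTopology
  have hm' : (m : ℝ) ≠ 0 := Nat.cast_ne_zero.mpr hm
  let scaled : L →+ E ⧸ S :=
    (QuotientAddGroup.mk' S).comp ((DistribSMul.toAddMonoidHom E (m : ℝ)⁻¹).comp L.subtype)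
  have hscaled : Finite scaled.range := scaled.finite_range_of_nsmul_eq_zero hm fun w ↦ by
    rw [← map_nsmul]
    refine (QuotientAddGroup.eq_zero_iff _).mpr ?_
    simpa [← Nat.cast_smul_eq_nsmul ℝ, smul_smul, inv_mul_cancel₀ hm'] using
      AddSubgroup.mem_sup_left w.2
  let restrict : D →+ E ⧸ S := (QuotientAddGroup.mk' S).comp D.subtype
  have hle : restrict.range ≤ scaled.range := by
    rintro _ ⟨⟨v, hv⟩, rfl⟩
    obtain ⟨a, ha, b, hb, hab⟩ := AddSubgroup.mem_sup.mp (hD v hv)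
    refine ⟨⟨a, ha⟩, QuotientAddGroup.eq_iff_sub_mem.mpr ?_⟩
    have : (m : ℝ)⁻¹ • a - v = -((m : ℝ)⁻¹ • b) := by
      rw [← Nat.cast_smul_eq_nsmul ℝ] at hab
      rw [eq_neg_iff_add_eq_zero, sub_add_eq_add_sub, ← smul_add, hab, smul_smul,
        inv_mul_cancel₀ hm', one_smul, sub_self]
    change (m : ℝ)⁻¹ • a - v ∈ S
    rw [this]
    exact neg_mem (AddSubgroup.mem_sup_right (W.smul_mem _ hb))
  have : Finite restrict.range := Finite.of_injective _ (AddSubgroup.inclusion_injective hle)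
  have hker : restrict.ker = S.addSubgroupOf D := by
    ext; simp [restrict, AddSubgroup.mem_addSubgroupOf]
  rw [isFiniteRelIndex_iff_finiteIndex, finiteIndex_iff_finite_quotient, ← hker]
  exact Finite.of_equiv _ (QuotientAddGroup.quotientKerEquivRange restrict).symm.toEquiv

end Lattice

open AffineEquiv Subgroup

/-- Let `Γ ≤ Aff(n)` have full translation lattice and finite holonomy
`F_Γ = τ(Γ)`, and write `N = N_{Aff(n)}(Γ)`, `C = C_{Aff(n)}(Γ)`.  Then `F_Γ` is a normal
subgroup of `τ(N)`, `Γ·C` is a normal subgroup of `N`, and `τ` induces a surjective group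
homomorphism `N/(Γ·C) → τ(N)/F_Γ` with finite kernel.  (The last clause is stated under
instance binders recording the two normality claims, which are themselves asserted.) -/
theorem stmt5 (n : ℕ) (Γ : Subgroup (Aff n))
    (hdisc : DiscreteTopology ↥(transLattice n Γ))
    (hspan : Submodule.span ℝ (transLattice n Γ) = ⊤)
    (hfin : Finite ↥(Γ.map (tau n))) :
    Γ.map (tau n) ≤ (Subgroup.normalizer (Γ : Set (Aff n))).map (tau n) ∧
    ((Γ.map (tau n)).subgroupOf ((Subgroup.normalizer (Γ : Set (Aff n))).map (tau n))).Normal ∧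
    Γ ⊔ Subgroup.centralizer (Γ : Set (Aff n)) ≤ (Subgroup.normalizer (Γ : Set (Aff n))) ∧
    ((Γ ⊔ Subgroup.centralizer (Γ : Set (Aff n))).subgroupOf (Subgroup.normalizer (Γ : Set (Aff n)))).Normal ∧
    ∀ [_h1 : ((Γ ⊔ Subgroup.centralizer (Γ : Set (Aff n))).subgroupOf (Subgroup.normalizer (Γ : Set (Aff n)))).Normal]
      [_h2 : ((Γ.map (tau n)).subgroupOf ((Subgroup.normalizer (Γ : Set (Aff n))).map (tau n))).Normal],
      ∃ φ : (↥(Subgroup.normalizer (Γ : Set (Aff n))) ⧸ (Γ ⊔ Subgroup.centralizer (Γ : Set (Aff n))).subgroupOf (Subgroup.normalizer (Γ : Set (Aff n))))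
            →* (↥((Subgroup.normalizer (Γ : Set (Aff n))).map (tau n)) ⧸ (Γ.map (tau n)).subgroupOf ((Subgroup.normalizer (Γ : Set (Aff n))).map (tau n))),
        Function.Surjective φ ∧ Finite ↥φ.ker ∧
        ∀ g : ↥(Subgroup.normalizer (Γ : Set (Aff n))),
          φ (QuotientGroup.mk g) =
            QuotientGroup.mk ⟨tau n ↑g, Subgroup.mem_map_of_mem (tau n) g.2⟩ := by
  refine ⟨map_mono le_normalizer, normal_map_subgroupOf_map_normalizer (tau n) Γ,
    sup_centralizer_le_normalizer Γ, normal_sup_centralizer_subgroupOf_normalizer Γ,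
    fun {_ _} ↦ ?_⟩
  have hτ : (Γ ⊔ centralizer (Γ : Set (Aff n))).subgroupOf (normalizer (Γ : Set (Aff n))) ≤
      ((Γ.map (tau n)).subgroupOf _).comap ((tau n).subgroupMap _) := fun g hg ↦
    map_sup_centralizer_linearHom_le hspan (mem_map_of_mem _ hg)
  refine ⟨QuotientGroup.map _ _ _ hτ,
    QuotientGroup.map_surjective_of_surjective _ _ _
      (QuotientGroup.mk_surjective.comp ((tau n).subgroupMap_surjective _)) hτ, ?_, fun _ ↦ rfl⟩
  have : DiscreteTopology (translationSubgroup Γ) := hdisc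
  have : Finite (Γ.map linearHom) := hfin
  have : (translationSubgroup Γ ⊔ (fixedSubspace Γ).toAddSubgroup).IsFiniteRelIndex
      (translationSubgroup (normalizer (Γ : Set (Aff n)))) :=
    AddSubgroup.isFiniteRelIndex_sup_of_nsmul_mem _ _ Nat.card_pos.ne'
      fun _ hv ↦ card_smul_mem_translationSubgroup_sup_fixedSubspace hv
  have := AddSubgroup.isFiniteRelIndex_of_le_left
    (translationSubgroup (normalizer (Γ : Set (Aff n))))
    (translationSubgroup_sup_fixedSubspace_le (H := Γ))
  refine (finite_range_translationClass.subset ?_).to_subtype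
  rintro x hx
  obtain ⟨g, rfl⟩ := QuotientGroup.mk_surjective x
  exact mk_mem_range_translationClass le_normalizer le_sup_left g.2
    (mem_subgroupOf.mp ((QuotientGroup.eq_one_iff _).mp hx))
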